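/- Let C ⊆ GF(4)^n be an additive code of type 4^{k_0}2^{k_1} with coordinates arranged in standard form, with C ⊆ C⊥ (trace-Hermitian dual) and C ≠ C⊥, and let d be the minimum Hamming weight of the codewords in C⊥ \ C. Then there exists an additive code S ⊆ GF(4)^{n−k_0} with |S| = 2^{2n−4k_0−2k_1} such that every codeword of S takes values in {0, ω} on each of the first k_1 coordinates (so S is a mixed code of lengths k_1 and n−k_0−k_1) and every nonzero codeword of S has Hamming weight at least d. -/

import Mathlib

open Finset

/-- The field `GF(4)`. -/
abbrev F4 := GaloisField 2 2

/-- The Hamming weight of a vector: the number of nonzero coordinates. -/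
noncomputable def hWt {ι : Type} [Fintype ι] {F : Type} [Zero F] (v : ι → F) : ℕ :=
  Nat.card {i : ι // v i ≠ 0}

/-- The trace-Hermitian inner product on `GF(4)^n`:
`u*v = ∑ᵢ (uᵢ vᵢ² + uᵢ² vᵢ)`. -/
noncomputable def trInner {ι : Type} [Fintype ι] (u v : ι → F4) : F4 :=
  ∑ i, (u i * (v i) ^ 2 + (u i) ^ 2 * v i)

/-- The dual of a set of vectors in `GF(4)^n` with respect to the trace-Hermitian
inner product. -/
noncomputable def trDual {ι : Type} [Fintype ι] (C : Set (ι → F4)) : Set (ι → F4) :=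
  {v | ∀ u ∈ C, trInner v u = 0}

section F4facts

lemma F4.two_eq_zero : (2 : F4) = 0 := CharTwo.two_eq_zero

lemma F4.pow4 (x : F4) : x ^ 4 = x := by
  have : Fintype F4 := Fintype.ofFinite F4
  have hc : Fintype.card F4 = 4 := by simpa using GaloisField.card 2 2 (by norm_num)
  have := FiniteField.pow_card x
  rwa [hc] at this

lemma F4.sq_fixed {x : F4} (h : x ^ 2 = x) : x = 0 ∨ x = 1 := by
  have : x * (x - 1) = 0 := by linear_combination h
  rcases mul_eq_zero.mp this with h1 | h1
  · exact Or.inl h1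
  · exact Or.inr (by linear_combination h1)

lemma F4.cube {x : F4} (h : x ≠ 0) : x ^ 3 = 1 := by
  have h4 : x * x ^ 3 = x * 1 := by rw [mul_one]; linear_combination F4.pow4 x
  exact mul_left_cancel₀ h h4

section omega
variable {ω : F4} (hω : orderOf ω = 3)
include hω

lemma F4.om3 : ω ^ 3 = 1 := by
  have := pow_orderOf_eq_one ω; rwa [hω] at this

lemma F4.om_ne_one : ω ≠ 1 := by
  intro h; rw [h, orderOf_one] at hω; norm_num at hω

lemma F4.om_ne_zero : ω ≠ 0 := by
  intro h
  have := F4.om3 hω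
  rw [h] at this; norm_num at this

lemma F4.om_add_one_ne_zero : ω + 1 ≠ 0 := by
  intro h
  exact F4.om_ne_one hω (by linear_combination h - F4.two_eq_zero)

lemma F4.om_sq_add_om : ω ^ 2 + ω = 1 := by
  have h : (ω + 1) * (ω ^ 2 + ω + 1) = 0 := by
    linear_combination F4.om3 hω + (ω ^ 2 + ω + 1) * F4.two_eq_zero
  rcases mul_eq_zero.mp h with h1 | h1
  · exact absurd h1 (F4.om_add_one_ne_zero hω)
  · linear_combination h1 - F4.two_eq_zero

lemma F4.li_pair : LinearIndependent (ZMod 2) ![1, (ω : F4)] := by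
  rw [LinearIndependent.pair_iff]
  intro s t hst
  have hcases : ∀ a : ZMod 2, a = 0 ∨ a = 1 := by decide
  rcases hcases s with rfl | rfl <;> rcases hcases t with rfl | rfl
  · exact ⟨rfl, rfl⟩
  · rw [zero_smul, one_smul, zero_add] at hst
    exact absurd hst (F4.om_ne_zero hω)
  · rw [zero_smul, one_smul, add_zero] at hst
    exact absurd hst one_ne_zero
  · rw [one_smul, one_smul, add_comm] at hst
    exact absurd hst (F4.om_add_one_ne_zero hω)

lemma F4.exists_pi : ∃ π : F4 →ₗ[ZMod 2] ZMod 2, π 1 = 1 := by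
  have hfr : Module.finrank (ZMod 2) F4 = 2 := GaloisField.finrank 2 (by norm_num)
  have hcard : Fintype.card (Fin 2) = Module.finrank (ZMod 2) F4 := by simp [hfr]
  let b := basisOfLinearIndependentOfCardEqFinrank (F4.li_pair hω) hcard
  have hb : ⇑b = ![1, ω] := coe_basisOfLinearIndependentOfCardEqFinrank _ _
  refine ⟨b.coord 0, ?_⟩
  have h1 : b 0 = 1 := by rw [hb]; rfl
  rw [← h1]
  simp [Module.Basis.coord_apply]

end omega
end F4facts

section Bilin

variable {ι : Type} [Fintype ι] [DecidableEq ι]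

lemma trInner_comm (u v : ι → F4) : trInner u v = trInner v u :=
  Finset.sum_congr rfl fun i _ => by ring

lemma trInner_add_left (u u' v : ι → F4) :
    trInner (u + u') v = trInner u v + trInner u' v := by
  unfold trInner
  rw [← Finset.sum_add_distrib]
  refine Finset.sum_congr rfl fun i _ => ?_
  simp only [Pi.add_apply]
  rw [CharTwo.add_sq]
  ring

lemma trInner_zero_left (v : ι → F4) : trInner 0 v = 0 := by
  unfold trInner; simp

lemma trInner_sq (u v : ι → F4) : (trInner u v) ^ 2 = trInner u v := by
  unfold trInner
  rw [CharTwo.sum_sq]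
  refine Finset.sum_congr rfl fun i _ => ?_
  have h4u := F4.pow4 (u i)
  have h4v := F4.pow4 (v i)
  have h2 := F4.two_eq_zero
  linear_combination (u i) ^ 2 * h4v + (v i) ^ 2 * h4u +
    ((u i) ^ 3 * (v i) ^ 3) * h2

lemma trInner_single (v : ι → F4) (j : ι) (α : F4) :
    trInner v (Pi.single j α) = v j * α ^ 2 + (v j) ^ 2 * α := by
  unfold trInner
  rw [Finset.sum_eq_single j]
  · rw [Pi.single_eq_same]
  · intro i _ hij
    rw [Pi.single_eq_of_ne hij]
    ring
  · intro h; exact absurd (Finset.mem_univ j) h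

lemma F4.orth_single {x α : F4} (hα : α ≠ 0) (h : x * α ^ 2 + x ^ 2 * α = 0) :
    x = 0 ∨ x = α := by
  have h2 : x * α * (α + x) = 0 := by linear_combination h
  rcases mul_eq_zero.mp h2 with h3 | h3
  · rcases mul_eq_zero.mp h3 with h4 | h4
    · exact Or.inl h4
    · exact absurd h4 hα
  · right
    linear_combination - h3 + x * F4.two_eq_zero

/-- The trace-Hermitian form composed with a linear functional, as a
`ZMod 2`-bilinear form. -/
noncomputable def bform (π : F4 →ₗ[ZMod 2] ZMod 2) :
    LinearMap.BilinForm (ZMod 2) (ι → F4) :=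
  LinearMap.mk₂ (ZMod 2) (fun u v => π (trInner u v))
    (fun u u' v => by
      show π (trInner (u + u') v) = π (trInner u v) + π (trInner u' v)
      rw [trInner_add_left, map_add])
    (fun c u v => by
      show π (trInner (c • u) v) = c • π (trInner u v)
      have hcases : ∀ a : ZMod 2, a = 0 ∨ a = 1 := by decide
      rcases hcases c with rfl | rfl
      · rw [zero_smul, zero_smul, trInner_zero_left, map_zero]
      · rw [one_smul, one_smul])
    (fun u v v' => by
      show π (trInner u (v + v')) = π (trInner u v) + π (trInner u v')
      rw [trInner_comm, trInner_add_left, map_add, trInner_comm v u, trInner_comm v' u])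
    (fun c u v => by
      show π (trInner u (c • v)) = c • π (trInner u v)
      have hcases : ∀ a : ZMod 2, a = 0 ∨ a = 1 := by decide
      rcases hcases c with rfl | rfl
      · rw [zero_smul, zero_smul, trInner_comm, trInner_zero_left, map_zero]
      · rw [one_smul, one_smul])

lemma bform_apply (π : F4 →ₗ[ZMod 2] ZMod 2) (u v : ι → F4) :
    bform π u v = π (trInner u v) := rfl

lemma bform_isRefl (π : F4 →ₗ[ZMod 2] ZMod 2) : (bform (ι := ι) π).IsRefl := by
  intro u v h
  rw [bform_apply, trInner_comm] at h
  exact h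

/-- If `π 1 = 1` then `π` detects vanishing of the (idempotent-valued) trace form. -/
lemma pi_detects {π : F4 →ₗ[ZMod 2] ZMod 2} (hπ : π 1 = 1) {x : F4}
    (hx : x ^ 2 = x) : π x = 0 ↔ x = 0 := by
  constructor
  · intro h
    rcases F4.sq_fixed hx with rfl | rfl
    · rfl
    · rw [hπ] at h; exact absurd h one_ne_zero
  · rintro rfl; exact map_zero π

lemma bform_eq_zero_iff {π : F4 →ₗ[ZMod 2] ZMod 2} (hπ : π 1 = 1) (u v : ι → F4) :
    bform π u v = 0 ↔ trInner u v = 0 :=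
  pi_detects hπ (trInner_sq u v)

lemma bform_nondeg {ω : F4} (hω : orderOf ω = 3) {π : F4 →ₗ[ZMod 2] ZMod 2}
    (hπ : π 1 = 1) : (bform (ι := ι) π).Nondegenerate := by
  apply (LinearMap.IsRefl.nondegenerate_iff_separatingLeft (bform_isRefl π)).mpr
  intro u h
  funext i
  by_contra hne
  have h1 := (bform_eq_zero_iff hπ u (Pi.single i (ω * u i))).mp (h _)
  rw [trInner_single] at h1
  have hcube : (u i) ^ 3 = 1 := F4.cube hne
  have hval : u i * (ω * u i) ^ 2 + (u i) ^ 2 * (ω * u i) = (ω ^ 2 + ω) * (u i) ^ 3 := by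
    ring
  rw [hval, hcube, mul_one, F4.om_sq_add_om hω] at h1
  exact one_ne_zero h1

end Bilin

/-- The rows of the standard-form generator matrix
`[[I_{k₀}, ωA₁, B₁], [ωI_{k₀}, ωA₂, B₂], [0, I_{k₁}, A₃]]` of an additive code of
type `4^{k₀}2^{k₁}` and length `n = k₀ + k₁ + m`, with column blocks of sizes
`k₀, k₁, m`. -/
noncomputable def stdRow (k0 k1 m : ℕ) (ω : F4)
    (A1 A2 : Matrix (Fin k0) (Fin k1) F4) (A3 : Matrix (Fin k1) (Fin m) F4)
    (B1 B2 : Matrix (Fin k0) (Fin m) F4) :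
    (Fin k0 ⊕ Fin k0 ⊕ Fin k1) → (Fin k0 ⊕ Fin k1 ⊕ Fin m) → F4
  | Sum.inl i =>
      Sum.elim (fun j => if j = i then 1 else 0)
        (Sum.elim (fun j => ω * A1 i j) (fun j => B1 i j))
  | Sum.inr (Sum.inl i) =>
      Sum.elim (fun j => if j = i then ω else 0)
        (Sum.elim (fun j => ω * A2 i j) (fun j => B2 i j))
  | Sum.inr (Sum.inr i) =>
      Sum.elim (fun _ => 0)
        (Sum.elim (fun j => if j = i then 1 else 0) (fun j => A3 i j))

/-- For a self-orthogonal additive code `C ⊆ C⊥`, `C ≠ C⊥`, of type `4^{k₀}2^{k₁}` in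
standard form with `d` the minimum weight of `C⊥ \ C`, there is a mixed additive code
`S ⊆ GF(4)^{n−k₀}` of lengths `k₁` and `n−k₀−k₁` with `|S| = 2^{2n−4k₀−2k₁}` whose
nonzero codewords all have weight at least `d`. -/
theorem stmt9 (k0 k1 m : ℕ) (ω : F4)
    (A1 A2 : Matrix (Fin k0) (Fin k1) F4) (A3 : Matrix (Fin k1) (Fin m) F4)
    (B1 B2 : Matrix (Fin k0) (Fin m) F4)
    (hω : orderOf ω = 3)
    (hB1 : ∀ i j, B1 i j = 0 ∨ B1 i j = 1) (hB2 : ∀ i j, B2 i j = 0 ∨ B2 i j = 1)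
    (hli : LinearIndependent (ZMod 2) (stdRow k0 k1 m ω A1 A2 A3 B1 B2))
    (C : Submodule (ZMod 2) ((Fin k0 ⊕ Fin k1 ⊕ Fin m) → F4))
    (hC : C = Submodule.span (ZMod 2) (Set.range (stdRow k0 k1 m ω A1 A2 A3 B1 B2)))
    (hself : (C : Set ((Fin k0 ⊕ Fin k1 ⊕ Fin m) → F4)) ⊆ trDual (C : Set ((Fin k0 ⊕ Fin k1 ⊕ Fin m) → F4)))
    (hne : (C : Set ((Fin k0 ⊕ Fin k1 ⊕ Fin m) → F4)) ≠ trDual (C : Set ((Fin k0 ⊕ Fin k1 ⊕ Fin m) → F4)))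
    (d : ℕ)
    (hd : IsLeast {w : ℕ | ∃ v ∈ trDual (C : Set ((Fin k0 ⊕ Fin k1 ⊕ Fin m) → F4)), v ∉ C ∧ hWt v = w} d) :
    ∃ S : Submodule (ZMod 2) ((Fin k1 ⊕ Fin m) → F4),
      Nat.card S = 2 ^ (2 * (k0 + k1 + m) - 4 * k0 - 2 * k1) ∧
      (∀ v ∈ S, ∀ j : Fin k1, v (Sum.inl j) = 0 ∨ v (Sum.inl j) = ω) ∧
      ∀ v ∈ S, v ≠ 0 → d ≤ hWt v := by
  classical
  obtain ⟨π, hπ⟩ := F4.exists_pi hω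
  set B : LinearMap.BilinForm (ZMod 2) ((Fin k0 ⊕ Fin k1 ⊕ Fin m) → F4) := bform π with hBdef
  have hrefl : B.IsRefl := bform_isRefl π
  have hnd : B.Nondegenerate := bform_nondeg hω hπ
  have hcases : ∀ a : ZMod 2, a = 0 ∨ a = 1 := by decide
  -- the trace dual as an orthogonal complement
  have hdual : trDual (C : Set ((Fin k0 ⊕ Fin k1 ⊕ Fin m) → F4)) = ↑(B.orthogonal C) := by
    ext v
    simp only [trDual, Set.mem_setOf_eq, SetLike.mem_coe,
      LinearMap.BilinForm.mem_orthogonal_iff]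
    constructor
    · intro h u hu
      rw [hBdef, bform_eq_zero_iff hπ, trInner_comm]
      exact h u hu
    · intro h u hu
      have h2 := h u hu
      rw [hBdef, bform_eq_zero_iff hπ] at h2
      rw [trInner_comm]
      exact h2
  -- the extra vectors
  set E : (Fin k0 ⊕ Fin k0 ⊕ Fin k1) → ((Fin k0 ⊕ Fin k1 ⊕ Fin m) → F4) :=
    Sum.elim (fun i => Pi.single (Sum.inl i) 1)
      (Sum.elim (fun i => Pi.single (Sum.inl i) ω)
        (fun j => Pi.single (Sum.inr (Sum.inl j)) ω)) with hEdef
  set W : Submodule (ZMod 2) ((Fin k0 ⊕ Fin k1 ⊕ Fin m) → F4) :=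
    C ⊔ Submodule.span (ZMod 2) (Set.range E) with hWdef
  set D : Submodule (ZMod 2) ((Fin k0 ⊕ Fin k1 ⊕ Fin m) → F4) := B.orthogonal W with hDdef
  -- coordinate properties of elements of D
  have hDprop : ∀ v ∈ D, (∀ i, v (Sum.inl i) = 0) ∧
      (∀ j, v (Sum.inr (Sum.inl j)) = 0 ∨ v (Sum.inr (Sum.inl j)) = ω) := by
    intro v hv
    have hE : ∀ t, trInner v (E t) = 0 := by
      intro t
      have htW : E t ∈ W :=
        Submodule.mem_sup_right (Submodule.subset_span (Set.mem_range_self t))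
      have h2 := (LinearMap.BilinForm.mem_orthogonal_iff.mp hv) (E t) htW
      rw [hBdef, bform_eq_zero_iff hπ] at h2
      rw [trInner_comm]
      exact h2
    constructor
    · intro i
      have h1 := hE (Sum.inl i)
      have h2 := hE (Sum.inr (Sum.inl i))
      simp only [hEdef, Sum.elim_inl, Sum.elim_inr] at h1 h2
      rw [trInner_single] at h1 h2
      rcases F4.orth_single one_ne_zero h1 with h | h
      · exact h
      · rcases F4.orth_single (F4.om_ne_zero hω) h2 with h' | h'
        · exact h'
        · rw [h] at h'
          exact absurd h'.symm (F4.om_ne_one hω)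
    · intro j
      have h1 := hE (Sum.inr (Sum.inr j))
      simp only [hEdef, Sum.elim_inl, Sum.elim_inr] at h1
      rw [trInner_single] at h1
      exact F4.orth_single (F4.om_ne_zero hω) h1
  -- D ∩ C = ⊥
  have hDC : D ⊓ C = ⊥ := by
    rw [eq_bot_iff]
    intro x hx
    obtain ⟨hxD, hxC⟩ := Submodule.mem_inf.mp hx
    obtain ⟨hz, hw⟩ := hDprop x hxD
    rw [hC, Submodule.mem_span_range_iff_exists_fun] at hxC
    obtain ⟨c, hc⟩ := hxC
    have heval : ∀ y, x y = ∑ t, c t • stdRow k0 k1 m ω A1 A2 A3 B1 B2 t y := by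
      intro y
      rw [← hc]
      simp only [Finset.sum_apply, Pi.smul_apply]
    have hzero1 : ∀ i0, c (Sum.inl i0) = 0 ∧ c (Sum.inr (Sum.inl i0)) = 0 := by
      intro i0
      have h : ∑ t, c t • stdRow k0 k1 m ω A1 A2 A3 B1 B2 t (Sum.inl i0) = 0 := by
        rw [← heval _]; exact hz i0
      rw [Fintype.sum_sum_type, Fintype.sum_sum_type] at h
      simp only [stdRow, Sum.elim_inl, Sum.elim_inr, smul_ite, smul_zero,
        Finset.sum_ite_eq, Finset.mem_univ, if_true, Finset.sum_const_zero, add_zero] at h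
      rcases hcases (c (Sum.inl i0)) with h1 | h1 <;>
        rcases hcases (c (Sum.inr (Sum.inl i0))) with h2 | h2 <;>
        rw [h1, h2] at h <;>
        simp only [zero_smul, one_smul, zero_add, add_zero] at h
      · exact ⟨h1, h2⟩
      · exact absurd h (F4.om_ne_zero hω)
      · exact absurd h one_ne_zero
      · rw [add_comm] at h
        exact absurd h (F4.om_add_one_ne_zero hω)
    have hzero2 : ∀ j0, c (Sum.inr (Sum.inr j0)) = 0 := by
      intro j0
      have h := heval (Sum.inr (Sum.inl j0))
      rw [Fintype.sum_sum_type, Fintype.sum_sum_type] at h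
      have e1 : ∑ i, c (Sum.inl i) •
          stdRow k0 k1 m ω A1 A2 A3 B1 B2 (Sum.inl i) (Sum.inr (Sum.inl j0)) = 0 :=
        Finset.sum_eq_zero fun i _ => by rw [(hzero1 i).1, zero_smul]
      have e2 : ∑ i, c (Sum.inr (Sum.inl i)) •
          stdRow k0 k1 m ω A1 A2 A3 B1 B2 (Sum.inr (Sum.inl i)) (Sum.inr (Sum.inl j0)) = 0 :=
        Finset.sum_eq_zero fun i _ => by rw [(hzero1 i).2, zero_smul]
      rw [e1, e2, zero_add, zero_add] at h
      simp only [stdRow, Sum.elim_inl, Sum.elim_inr, smul_ite, smul_zero,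
        Finset.sum_ite_eq, Finset.mem_univ, if_true] at h
      rcases hcases (c (Sum.inr (Sum.inr j0))) with h1 | h1
      · exact h1
      · rw [h1, one_smul] at h
        rcases hw j0 with h2 | h2
        · rw [h] at h2; exact absurd h2 one_ne_zero
        · rw [h] at h2; exact absurd h2.symm (F4.om_ne_one hω)
    have : x = 0 := by
      rw [← hc]
      apply Finset.sum_eq_zero
      intro t _
      rcases t with i | i | j
      · rw [(hzero1 i).1, zero_smul]
      · rw [(hzero1 i).2, zero_smul]
      · rw [hzero2 j, zero_smul]
    rwa [Submodule.mem_bot]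
  -- dimension counting
  have hfrV : Module.finrank (ZMod 2) ((Fin k0 ⊕ Fin k1 ⊕ Fin m) → F4)
      = 2 * (k0 + k1 + m) := by
    rw [Module.finrank_pi_fintype]
    simp only [GaloisField.finrank 2 (by norm_num : 2 ≠ 0), Finset.sum_const,
      Finset.card_univ, smul_eq_mul]
    simp only [Fintype.card_sum, Fintype.card_fin]
    ring
  have hfrC : Module.finrank (ZMod 2) ↥C = 2 * k0 + k1 := by
    rw [hC, finrank_span_eq_card hli]
    simp only [Fintype.card_sum, Fintype.card_fin]
    ring
  have hfrE : Module.finrank (ZMod 2) ↥(Submodule.span (ZMod 2) (Set.range E))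
      ≤ 2 * k0 + k1 := by
    have h1 := finrank_span_le_card (R := ZMod 2) (Set.range E)
    rw [Set.toFinset_card] at h1
    refine h1.trans ((Fintype.card_range_le E).trans ?_)
    simp only [Fintype.card_sum, Fintype.card_fin]
    omega
  have hfrW : Module.finrank (ZMod 2) ↥W ≤ 4 * k0 + 2 * k1 := by
    have h1 := Submodule.finrank_sup_add_finrank_inf_eq C
      (Submodule.span (ZMod 2) (Set.range E))
    rw [hWdef]
    omega
  have hfrD : Module.finrank (ZMod 2) ↥D
      = 2 * (k0 + k1 + m) - Module.finrank (ZMod 2) ↥W := by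
    rw [hDdef, LinearMap.BilinForm.finrank_orthogonal hnd, hfrV]
  have hfrOC : Module.finrank (ZMod 2) ↥(B.orthogonal C)
      = 2 * (k0 + k1 + m) - (2 * k0 + k1) := by
    rw [LinearMap.BilinForm.finrank_orthogonal hnd, hfrV, hfrC]
  have hCle : C ≤ B.orthogonal C := by
    intro x hx
    have h2 := hself hx
    rwa [hdual, SetLike.mem_coe] at h2
  have hDle : D ≤ B.orthogonal C :=
    LinearMap.BilinForm.orthogonal_le le_sup_left
  have hsum : Module.finrank (ZMod 2) ↥D + Module.finrank (ZMod 2) ↥C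
      ≤ Module.finrank (ZMod 2) ↥(B.orthogonal C) := by
    have h1 := Submodule.finrank_sup_add_finrank_inf_eq D C
    rw [hDC, finrank_bot, add_zero] at h1
    have h3 := Submodule.finrank_mono (sup_le hDle hCle)
    omega
  have hDval : Module.finrank (ZMod 2) ↥D = 2 * (k0 + k1 + m) - 4 * k0 - 2 * k1 := by
    omega
  have hcardD : Nat.card ↥D = 2 ^ (2 * (k0 + k1 + m) - 4 * k0 - 2 * k1) := by
    haveI : Fintype ↥D := Fintype.ofFinite _
    rw [Nat.card_eq_fintype_card, Module.card_eq_pow_finrank (K := ZMod 2) (V := ↥D),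
      ZMod.card, hDval]
  -- the projection
  set P : ((Fin k0 ⊕ Fin k1 ⊕ Fin m) → F4) →ₗ[ZMod 2] ((Fin k1 ⊕ Fin m) → F4) :=
    LinearMap.funLeft (ZMod 2) F4 Sum.inr with hPdef
  have hPapp : ∀ (u : (Fin k0 ⊕ Fin k1 ⊕ Fin m) → F4) (y : Fin k1 ⊕ Fin m),
      P u y = u (Sum.inr y) := fun u y => rfl
  refine ⟨D.map P, ?_, ?_, ?_⟩
  · -- cardinality
    have hinj : Set.InjOn P ↑D := by
      intro u hu v hv huv
      funext y
      rcases y with i | y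
      · rw [(hDprop u hu).1 i, (hDprop v hv).1 i]
      · rw [← hPapp u y, ← hPapp v y, huv]
    calc Nat.card ↥(D.map P) = (↑(D.map P) : Set ((Fin k1 ⊕ Fin m) → F4)).ncard :=
          Nat.card_coe_set_eq _
      _ = (P '' ↑D).ncard := by rw [Submodule.map_coe]
      _ = (↑D : Set ((Fin k0 ⊕ Fin k1 ⊕ Fin m) → F4)).ncard :=
          Set.ncard_image_of_injOn hinj
      _ = Nat.card ↥D := (Nat.card_coe_set_eq _).symm
      _ = 2 ^ (2 * (k0 + k1 + m) - 4 * k0 - 2 * k1) := hcardD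
  · -- mixed-code property
    rintro v hv j
    obtain ⟨u, hu, rfl⟩ := Submodule.mem_map.mp hv
    rw [hPapp]
    exact (hDprop u hu).2 j
  · -- weight property
    rintro v hv hvne
    obtain ⟨u, hu, rfl⟩ := Submodule.mem_map.mp hv
    have hune : u ≠ 0 := by
      rintro rfl
      exact hvne (map_zero P)
    have huC : u ∉ C := by
      intro hC'
      apply hune
      have h2 : u ∈ D ⊓ C := Submodule.mem_inf.mpr ⟨hu, hC'⟩
      rw [hDC] at h2
      exact (Submodule.mem_bot _).mp h2
    have hudual : u ∈ trDual (C : Set ((Fin k0 ⊕ Fin k1 ⊕ Fin m) → F4)) := by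
      rw [hdual]
      exact SetLike.mem_coe.mpr (hDle hu)
    have hdle : d ≤ hWt u := hd.2 ⟨u, hudual, huC, rfl⟩
    have hwt : hWt (P u) = hWt u := by
      unfold hWt
      refine Nat.card_congr (Equiv.ofBijective
        (fun p => ⟨Sum.inr p.1, p.2⟩) ⟨?_, ?_⟩)
      · rintro ⟨y1, h1⟩ ⟨y2, h2⟩ h
        simp only [Subtype.mk.injEq, Sum.inr.injEq] at h
        exact Subtype.ext (Sum.inr_injective (congrArg Subtype.val h))
      · rintro ⟨x, hx⟩
        rcases x with i | y
        · exact absurd ((hDprop u hu).1 i) hx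
        · exact ⟨⟨y, hx⟩, rfl⟩
    rw [hwt]
    exact hdle
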